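/- Under Algorithm 1, let h be the distance from an original border node of the initial configuration to a node u_h in the segment G'. If h is odd, then the border robots arriving at u_h arrive with color Blue; if h is even, they arrive with color Red (the moving border changes color between Red and Blue alternately at every hop, starting Red at the original border). -/
import Mathlib


set_option autoImplicit false

/-! ### Luminous myopic robots on an anonymous ring: basic model -/

/-- A configuration of `R` luminous robots with light colors in `C`
on an anonymous ring with `N` nodes (the nodes are `ZMod N`). -/
structure Config (N R : ℕ) (C : Type) where
  pos : Fin R → ZMod N
  light : Fin R → C

namespace Gathering

variable {N R : ℕ} {C : Type}

/-- The set of light colors present at node `u`. -/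
def colorsAt (cfg : Config N R C) (u : ZMod N) : Set C :=
  {c | ∃ r, cfg.pos r = u ∧ cfg.light r = c}

/-- Node `u` hosts at least one robot. -/
def occupiedNode (cfg : Config N R C) (u : ZMod N) : Prop :=
  ∃ r, cfg.pos r = u

/-- The view from node `u` with visibility range `φ`, in orientation `dir`:
the set of colors at signed offset `k`, for `|k| ≤ φ` (and `∅` beyond the range). -/
def nodeView (φ : ℕ) (cfg : Config N R C) (u : ZMod N) (dir : Bool) : ℤ → Set C :=
  fun k => if |k| ≤ (φ : ℤ) then
      colorsAt cfg (u + (if dir then (k : ZMod N) else ((-k : ℤ) : ZMod N)))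
    else ∅

/-- Node `u` is a border node: it is occupied, all `φ` nodes on one side are
empty, and some node within distance `φ` on the other side is occupied. -/
def isBorderNode (φ : ℕ) (cfg : Config N R C) (u : ZMod N) : Prop :=
  occupiedNode cfg u ∧
  ∃ dir : Bool,
    (∀ k : ℤ, 1 ≤ k → k ≤ (φ : ℤ) →
      ¬ occupiedNode cfg (u + (if dir then (k : ZMod N) else ((-k : ℤ) : ZMod N)))) ∧
    (∃ k : ℤ, 1 ≤ k ∧ k ≤ (φ : ℤ) ∧
      occupiedNode cfg (u + (if dir then ((-k : ℤ) : ZMod N) else (k : ZMod N))))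

/-- Robot `r` is a border robot. -/
def isBorderRobot (φ : ℕ) (cfg : Config N R C) (r : Fin R) : Prop :=
  isBorderNode φ cfg (cfg.pos r)

/-- The borders of a configuration: an occupied node together with a direction
in which the next `φ` nodes are all empty (their number is always even). -/
def borderPairs (φ : ℕ) (cfg : Config N R C) : Set (ZMod N × Bool) :=
  {p | occupiedNode cfg p.1 ∧
    ∀ k : ℤ, 1 ≤ k → k ≤ (φ : ℤ) →
      ¬ occupiedNode cfg (p.1 + (if p.2 then (k : ZMod N) else ((-k : ℤ) : ZMod N)))}

/-- Ring distance between two nodes. -/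
def ringDist (u v : ZMod N) : ℕ := min (u - v).val (v - u).val

/-- Robots `r` and `r'` can observe each other. -/
def canSee (φ : ℕ) (cfg : Config N R C) (r r' : Fin R) : Prop :=
  ringDist (cfg.pos r) (cfg.pos r') ≤ φ

/-- The visibility graph of the configuration is connected. -/
def VisConnected (φ : ℕ) (cfg : Config N R C) : Prop :=
  ∀ r r' : Fin R, Relation.ReflTransGen (canSee φ cfg) r r'

/-- The span of a configuration: the least `m` such that all occupied nodes fit
in a window of `m + 1` consecutive nodes.  In a configuration with exactly two
borders this is the distance `D` between the two border nodes. -/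
noncomputable def spanDist (cfg : Config N R C) : ℕ :=
  sInf {m : ℕ | ∃ b : ZMod N, ∀ u, occupiedNode cfg u → ∃ i : ℕ, i ≤ m ∧ u = b + (i : ZMod N)}

/-! ### Algorithms and asynchronous executions -/

/-- A deterministic algorithm for luminous robots in the full-light model:
given the robot's own color and its (oriented) view, output a new color and a
movement (`+1`, `0` or `-1`, relative to the orientation of the view). -/
structure Algo (C : Type) where
  out : C → (ℤ → Set C) → C × SignType

/-- The destination of a movement `m` from node `u`, for view orientation `dir`. -/
def moveTarget (u : ZMod N) (dir : Bool) (m : SignType) : ZMod N :=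
  u + (if dir then ((m : ℤ) : ZMod N) else ((-(m : ℤ) : ℤ) : ZMod N))

/-- An execution of algorithm `A` under a fair asynchronous scheduler.
At each instant every robot either stays idle, performs a Look (together with
the deterministic Compute, recording a plan: a new color and a destination
node; the orientation of the snapshot is chosen adversarially, as robots are
disoriented), becomes visible with its new color (end of the Compute phase,
keeping its pending plan), or performs its atomic Move, completing the cycle.
A robot `r` with `plan t r ≠ none` is a robot whose view may be outdated. -/
structure AsyncExec (N R : ℕ) (C : Type) (φ : ℕ) (A : Algo C) where
  cfg : ℕ → Config N R C
  plan : ℕ → Fin R → Option (C × ZMod N)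
  init_plan : ∀ r, plan 0 r = none
  step : ∀ (t : ℕ) (r : Fin R),
      ((cfg (t+1)).pos r = (cfg t).pos r ∧ (cfg (t+1)).light r = (cfg t).light r ∧
        plan (t+1) r = plan t r)
    ∨ (plan t r = none ∧ (cfg (t+1)).pos r = (cfg t).pos r ∧
        (cfg (t+1)).light r = (cfg t).light r ∧
        ∃ dir : Bool,
          plan (t+1) r =
            some ((A.out ((cfg t).light r) (nodeView φ (cfg t) ((cfg t).pos r) dir)).1,
              moveTarget ((cfg t).pos r) dir
                (A.out ((cfg t).light r) (nodeView φ (cfg t) ((cfg t).pos r) dir)).2))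
    ∨ (∃ c u, plan t r = some (c, u) ∧ (cfg (t+1)).pos r = (cfg t).pos r ∧
        (cfg (t+1)).light r = c ∧ plan (t+1) r = some (c, u))
    ∨ (∃ c u, plan t r = some (c, u) ∧ (cfg (t+1)).pos r = u ∧
        (cfg (t+1)).light r = c ∧ plan (t+1) r = none)
  fair : ∀ (r : Fin R) (t : ℕ), ∃ t', t ≤ t' ∧ plan t' r ≠ none ∧ plan (t'+1) r = none

/-- The execution achieves gathering: from some time on, all robots occupy a
single node and remain there forever. -/
def AchievesGathering {N R : ℕ} {C : Type} {φ : ℕ} {A : Algo C}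
    (e : AsyncExec N R C φ A) : Prop :=
  ∃ (t : ℕ) (u : ZMod N), ∀ t', t ≤ t' → ∀ r, (e.cfg t').pos r = u

/-! ### Initial configurations -/

/-- The robots occupy a segment `G'` of `Minit` nodes with base (border) node
`b`: both endpoints of the segment are occupied and are borders (the `φ` nodes
beyond each endpoint are empty), every occupied node lies in the segment,
consecutive occupied nodes are at distance at most `φ` (`H_init ≤ φ`, i.e. the
visibility graph is connected), and `Oinit` is the number of occupied nodes of
the segment. -/
def SegmentInitOn (φ : ℕ) (cfg : Config N R C) (b : ZMod N) (Minit Oinit : ℕ) : Prop :=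
  2 ≤ Minit ∧
  occupiedNode cfg b ∧ occupiedNode cfg (b + ((Minit - 1 : ℕ) : ZMod N)) ∧
  (∀ u, occupiedNode cfg u → ∃ i : ℕ, i < Minit ∧ u = b + (i : ZMod N)) ∧
  (∀ k : ℕ, 1 ≤ k → k ≤ φ →
    ¬ occupiedNode cfg (b - (k : ZMod N)) ∧
    ¬ occupiedNode cfg (b + ((Minit - 1 : ℕ) : ZMod N) + (k : ZMod N))) ∧
  (∀ i : ℕ, i + 1 < Minit → occupiedNode cfg (b + (i : ZMod N)) →
    ∃ j : ℕ, i < j ∧ j ≤ i + φ ∧ j < Minit ∧ occupiedNode cfg (b + (j : ZMod N))) ∧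
  Oinit = {i : Fin Minit | occupiedNode cfg (b + ((i : ℕ) : ZMod N))}.ncard

/-- Admissible initial configuration: all robots have the color `white`, and
the robots occupy a segment with two borders and connected visibility graph. -/
def AdmissibleInit (φ : ℕ) (cfg : Config N R C) (white : C) (Minit Oinit : ℕ) : Prop :=
  (∀ r, cfg.light r = white) ∧ ∃ b : ZMod N, SegmentInitOn φ cfg b Minit Oinit

/-! ### Edge-view symmetry and cautiousness -/

/-- Robots `r1` and `r2` are indistinguishable: they have the same color and
the same view (up to reversal, as robots are disoriented). -/
def viewsEq (φ : ℕ) (cfg : Config N R C) (r1 r2 : Fin R) : Prop :=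
  cfg.light r1 = cfg.light r2 ∧
  (nodeView φ cfg (cfg.pos r1) true = nodeView φ cfg (cfg.pos r2) true ∨
   nodeView φ cfg (cfg.pos r1) true = nodeView φ cfg (cfg.pos r2) false)

/-- Definition 20: a configuration is edge-view-symmetric if at least two
distinct nodes host robots and there is an edge `(u_i, u_{i+1})` such that for
every `k ≥ 0`, every robot at `u_{i-k}` has an indistinguishable counterpart at
`u_{i+k+1}`. -/
def EdgeViewSymmetric (φ : ℕ) (cfg : Config N R C) : Prop :=
  (∃ u v : ZMod N, u ≠ v ∧ occupiedNode cfg u ∧ occupiedNode cfg v) ∧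
  ∃ i : ZMod N, ∀ (k : ℕ) (r1 : Fin R), cfg.pos r1 = i - (k : ZMod N) →
    ∃ r2 : Fin R, cfg.pos r2 = i + (k : ZMod N) + 1 ∧ viewsEq φ cfg r1 r2

/-- Definition 23: an algorithm is cautious if robots only ever move toward
other occupied nodes (they never expand the span of the visibility graph). -/
def Cautious (φ : ℕ) (A : Algo C) : Prop :=
  ∀ (c : C) (v : ℤ → Set C),
    ((A.out c v).2 = 1 → ∃ k : ℤ, 1 ≤ k ∧ k ≤ (φ : ℤ) ∧ v k ≠ ∅) ∧
    ((A.out c v).2 = -1 → ∃ k : ℤ, 1 ≤ k ∧ k ≤ (φ : ℤ) ∧ v (-k) ≠ ∅)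

end Gathering

namespace Gathering

/-! ### Algorithm 1 (three colors) -/

/-- The three light colors of Algorithm 1. -/
inductive C3 : Type
  | White
  | Red
  | Blue
deriving DecidableEq

open Classical in
/-- The rules of Algorithm 1, for a view oriented so that the `φ` nodes at
negative offsets are empty (the observing robot is a border robot and the
positive direction points inward), in priority order
R1, R2a, R2b, R3a, R3b, R4a, R4b, R5. -/
noncomputable def algo1Rules (φ : ℕ) (c : C3) (v : ℤ → Set C3) : C3 × SignType :=
  -- R1 : ∅^φ [W!] (¬∅^φ)  ::  R
  if c = C3.White ∧ v 0 = {C3.White} then (C3.Red, 0)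
  -- R2a : ∅^φ [R!] (∅, B!) (¬(∅^(φ-1)))  ::  B, →
  else if c = C3.Red ∧ v 0 = {C3.Red} ∧ (v 1 = ∅ ∨ v 1 = {C3.Blue}) ∧
      ¬ (∀ k : ℤ, 2 ≤ k → k ≤ (φ : ℤ) → v k = ∅) then (C3.Blue, 1)
  -- R2b : ∅^φ [R!] (W) (?^(φ-1))  ::  B, →
  else if c = C3.Red ∧ v 0 = {C3.Red} ∧ C3.White ∈ v 1 ∧
      (∀ k : ℤ, 2 ≤ k → k ≤ (φ : ℤ) → v k ≠ ∅) then (C3.Blue, 1)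
  -- R3a : ∅^φ [B!] (∅, R!) (¬(∅^(φ-1)))  ::  R, →
  else if c = C3.Blue ∧ v 0 = {C3.Blue} ∧ (v 1 = ∅ ∨ v 1 = {C3.Red}) ∧
      ¬ (∀ k : ℤ, 2 ≤ k → k ≤ (φ : ℤ) → v k = ∅) then (C3.Red, 1)
  -- R3b : ∅^φ [B!] (W) (?^(φ-1))  ::  R, →
  else if c = C3.Blue ∧ v 0 = {C3.Blue} ∧ C3.White ∈ v 1 ∧
      (∀ k : ℤ, 2 ≤ k → k ≤ (φ : ℤ) → v k ≠ ∅) then (C3.Red, 1)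
  -- R4a : ∅^φ [R [W]] (¬∅^φ)  ::  R
  else if c = C3.White ∧ C3.Red ∈ v 0 then (C3.Red, 0)
  -- R4b : ∅^φ [B [W]] (¬∅^φ)  ::  B
  else if c = C3.White ∧ C3.Blue ∈ v 0 then (C3.Blue, 0)
  -- R5 : ∅^φ [R!] (B!) (∅^(φ-1))  ::  B, →
  else if c = C3.Red ∧ v 0 = {C3.Red} ∧ v 1 = {C3.Blue} ∧
      (∀ k : ℤ, 2 ≤ k → k ≤ (φ : ℤ) → v k = ∅) then (C3.Blue, 1)
  else (c, 0)

open Classical in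
/-- Algorithm 1: the rules are applied in the orientation in which the `φ`
nearest nodes on one side are all empty.  A robot seeing no other robot does
nothing (rule R0), and no rule is enabled for a non-border robot. -/
noncomputable def algo1 (φ : ℕ) : Algo C3 where
  out := fun c v =>
    if (∀ k : ℤ, 1 ≤ k → k ≤ (φ : ℤ) → v (-k) = ∅) ∧
       (∀ k : ℤ, 1 ≤ k → k ≤ (φ : ℤ) → v k = ∅) then (c, 0)
    else if ∀ k : ℤ, 1 ≤ k → k ≤ (φ : ℤ) → v (-k) = ∅ then algo1Rules φ c v
    else if ∀ k : ℤ, 1 ≤ k → k ≤ (φ : ℤ) → v k = ∅ then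
      ((algo1Rules φ c (fun k => v (-k))).1, -(algo1Rules φ c (fun k => v (-k))).2)
    else (c, 0)

/-! ### Algorithm 2 (four colors) -/

/-- The four light colors of Algorithm 2. -/
inductive C4 : Type
  | White
  | Red
  | Blue
  | Purple
deriving DecidableEq

open Classical in
/-- The rules of Algorithm 2, for a view oriented so that the `φ` nodes at
negative offsets are empty, in priority order
R1, R2a-1, R2a-2, R2b, R3a-1, R3a-2, R3b, R4a, R4b, R5a, R5b-1, R5b-2, R5b-3. -/
noncomputable def algo2Rules (φ : ℕ) (c : C4) (v : ℤ → Set C4) : C4 × SignType :=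
  -- R1 : ∅^φ [W!] (¬∅^φ)  ::  R
  if c = C4.White ∧ v 0 = {C4.White} then (C4.Red, 0)
  -- R2a-1 : ∅^φ [R!] (∅) (¬(∅^(φ-1)))  ::  →
  else if c = C4.Red ∧ v 0 = {C4.Red} ∧ v 1 = ∅ ∧
      ¬ (∀ k : ℤ, 2 ≤ k → k ≤ (φ : ℤ) → v k = ∅) then (C4.Red, 1)
  -- R2a-2 : ∅^φ [R!] (¬W, R) (¬(∅^(φ-1)))  ::  →
  else if c = C4.Red ∧ v 0 = {C4.Red} ∧ (C4.Red ∈ v 1 ∧ C4.White ∉ v 1) ∧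
      ¬ (∀ k : ℤ, 2 ≤ k → k ≤ (φ : ℤ) → v k = ∅) then (C4.Red, 1)
  -- R2b : ∅^φ [R!] (W) (?^(φ-1))  ::  B, →
  else if c = C4.Red ∧ v 0 = {C4.Red} ∧ C4.White ∈ v 1 ∧
      (∀ k : ℤ, 2 ≤ k → k ≤ (φ : ℤ) → v k ≠ ∅) then (C4.Blue, 1)
  -- R3a-1 : ∅^φ [B!] (∅) (¬(∅^(φ-1)))  ::  →
  else if c = C4.Blue ∧ v 0 = {C4.Blue} ∧ v 1 = ∅ ∧
      ¬ (∀ k : ℤ, 2 ≤ k → k ≤ (φ : ℤ) → v k = ∅) then (C4.Blue, 1)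
  -- R3a-2 : ∅^φ [B!] (¬W, B) (¬(∅^(φ-1)))  ::  →
  else if c = C4.Blue ∧ v 0 = {C4.Blue} ∧ (C4.Blue ∈ v 1 ∧ C4.White ∉ v 1) ∧
      ¬ (∀ k : ℤ, 2 ≤ k → k ≤ (φ : ℤ) → v k = ∅) then (C4.Blue, 1)
  -- R3b : ∅^φ [B!] (W) (?^(φ-1))  ::  R, →
  else if c = C4.Blue ∧ v 0 = {C4.Blue} ∧ C4.White ∈ v 1 ∧
      (∀ k : ℤ, 2 ≤ k → k ≤ (φ : ℤ) → v k ≠ ∅) then (C4.Red, 1)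
  -- R4a : ∅^φ [R [W]] (¬∅^φ)  ::  R
  else if c = C4.White ∧ C4.Red ∈ v 0 then (C4.Red, 0)
  -- R4b : ∅^φ [B [W]] (¬∅^φ)  ::  B
  else if c = C4.White ∧ C4.Blue ∈ v 0 then (C4.Blue, 0)
  -- R5a : ∅^φ [?] (P) (∅^(φ-1))  ::  →
  else if C4.Purple ∈ v 1 ∧ (∀ k : ℤ, 2 ≤ k → k ≤ (φ : ℤ) → v k = ∅) then (c, 1)
  -- R5b-1 : ∅^φ [B!] (R!) (∅^(φ-1))  ::  P
  else if c = C4.Blue ∧ v 0 = {C4.Blue} ∧ v 1 = {C4.Red} ∧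
      (∀ k : ℤ, 2 ≤ k → k ≤ (φ : ℤ) → v k = ∅) then (C4.Purple, 0)
  -- R5b-2 : ∅^φ [B!] (R, B) (∅^(φ-1))  ::  P
  else if c = C4.Blue ∧ v 0 = {C4.Blue} ∧ (C4.Red ∈ v 1 ∧ C4.Blue ∈ v 1) ∧
      (∀ k : ℤ, 2 ≤ k → k ≤ (φ : ℤ) → v k = ∅) then (C4.Purple, 0)
  -- R5b-3 : ∅^φ [R [B]] (R!) (∅^(φ-1))  ::  P
  else if c = C4.Blue ∧ C4.Red ∈ v 0 ∧ v 1 = {C4.Red} ∧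
      (∀ k : ℤ, 2 ≤ k → k ≤ (φ : ℤ) → v k = ∅) then (C4.Purple, 0)
  else (c, 0)

open Classical in
/-- Algorithm 2: the rules are applied in the orientation in which the `φ`
nearest nodes on one side are all empty.  A robot seeing no other robot does
nothing (rule R0), and no rule is enabled for a non-border robot. -/
noncomputable def algo2 (φ : ℕ) : Algo C4 where
  out := fun c v =>
    if (∀ k : ℤ, 1 ≤ k → k ≤ (φ : ℤ) → v (-k) = ∅) ∧
       (∀ k : ℤ, 1 ≤ k → k ≤ (φ : ℤ) → v k = ∅) then (c, 0)
    else if ∀ k : ℤ, 1 ≤ k → k ≤ (φ : ℤ) → v (-k) = ∅ then algo2Rules φ c v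
    else if ∀ k : ℤ, 1 ≤ k → k ≤ (φ : ℤ) → v k = ∅ then
      ((algo2Rules φ c (fun k => v (-k))).1, -(algo2Rules φ c (fun k => v (-k))).2)
    else (c, 0)

/-- `#O_W`: the number of nodes hosting a White robot that are not border
nodes. -/
noncomputable def numWhiteNonBorder {N R : ℕ} (φ : ℕ) (cfg : Config N R C4) : ℕ :=
  {u : ZMod N | C4.White ∈ colorsAt cfg u ∧ ¬ isBorderNode φ cfg u}.ncard

end Gathering


namespace Gathering

namespace A1P

open Classical

variable {N R phi : ℕ}

/-! #### Small helpers -/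

lemma light_mem_colorsAt {cfg : Config N R C3} {r : Fin R} {u : ZMod N}
    (h : cfg.pos r = u) : cfg.light r ∈ colorsAt cfg u := ⟨r, h, rfl⟩

lemma occupied_of_colors_ne {cfg : Config N R C3} {u : ZMod N}
    (h : colorsAt cfg u ≠ ∅) : occupiedNode cfg u := by
  rcases Set.nonempty_iff_ne_empty.2 h with ⟨c, r, hr, -⟩
  exact ⟨r, hr⟩

lemma not_occupied_of_colors_empty {cfg : Config N R C3} {u : ZMod N}
    (h : colorsAt cfg u = ∅) : ¬ occupiedNode cfg u := by
  rintro ⟨r, hr⟩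
  have : cfg.light r ∈ colorsAt cfg u := ⟨r, hr, rfl⟩
  simp [h] at this

/-- The color a robot should have at offset `j` from the base border. -/
def colorOf (j : ℕ) : C3 := if Even j then C3.Red else C3.Blue

lemma colorOf_red {j : ℕ} (h : Even j) : colorOf j = C3.Red := if_pos h
lemma colorOf_blue {j : ℕ} (h : ¬ Even j) : colorOf j = C3.Blue := if_neg h

lemma even_of_colorOf_red {j : ℕ} (h : colorOf j = C3.Red) : Even j := by
  by_contra hc; rw [colorOf_blue hc] at h; cases h

lemma odd_of_colorOf_blue {j : ℕ} (h : colorOf j = C3.Blue) : ¬ Even j := by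
  intro hc; rw [colorOf_red hc] at h; cases h

/-- Offset of a node from the base node `b`. -/
def off (b u : ZMod N) : ℕ := (u - b).val

lemma off_spec [NeZero N] (b u : ZMod N) : u = b + ((off b u : ℕ) : ZMod N) := by
  simp [off, ZMod.natCast_val, ZMod.cast_id]

lemma off_add [NeZero N] (b : ZMod N) {i : ℕ} (h : i < N) :
    off b (b + (i : ZMod N)) = i := by
  have : b + (i : ZMod N) - b = (i : ZMod N) := by ring
  rw [off, this, ZMod.val_cast_of_lt h]

lemma off_sub [NeZero N] (b : ZMod N) {d : ℕ} (h1 : 1 ≤ d) (h2 : d < N) :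
    off b (b - (d : ZMod N)) = N - d := by
  have hne : (d : ZMod N) ≠ 0 := by
    rw [Ne, ZMod.natCast_eq_zero_iff]
    intro hdvd; have := Nat.le_of_dvd (by omega) hdvd; omega
  have : b - (d : ZMod N) - b = -(d : ZMod N) := by ring
  rw [off, this, ZMod.neg_val, if_neg hne, ZMod.val_cast_of_lt h2]

/-! #### The invariant -/

variable {Minit : ℕ} {e : AsyncExec N R C3 phi (algo1 phi)} {b : ZMod N}

structure Inv (Minit : ℕ) (e : AsyncExec N R C3 phi (algo1 phi)) (b : ZMod N)
    (t : ℕ) : Prop where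
  h1 : ∀ r, off b ((e.cfg t).pos r) < Minit
  h2 : ∀ r, (e.cfg t).light r = C3.White ∨
      (e.cfg t).light r = colorOf (off b ((e.cfg t).pos r)) ∨
      ∃ c u, e.plan t r = some (c, u) ∧ (e.cfg t).light r = c
  h3 : ∀ r c u, e.plan t r = some (c, u) →
      off b u < Minit ∧
      (u = (e.cfg t).pos r ∨ u = (e.cfg t).pos r + 1 ∨ u = (e.cfg t).pos r - 1) ∧
      (c = C3.White → u = (e.cfg t).pos r ∧ (e.cfg t).light r = C3.White) ∧
      (c ≠ C3.White → c = colorOf (off b u))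
  hM : ∀ r c u, e.plan t r = some (c, u) → u ≠ (e.cfg t).pos r →
      ∀ r', (e.cfg t).pos r' = (e.cfg t).pos r → (e.cfg t).light r' ≠ C3.White
  hD : ∀ r c u, e.plan t r = some (c, u) → u ≠ (e.cfg t).pos r →
      ∀ k : ℕ, 1 ≤ k → k ≤ phi →
      ∀ r', (e.cfg t).light r' = C3.White →
        (e.cfg t).pos r' ≠ (e.cfg t).pos r + ((e.cfg t).pos r - u) * (k : ZMod N)
  hI4 : ∀ j : ℕ, 1 ≤ j → j + 1 < Minit →
      occupiedNode (e.cfg t) (b + (j : ZMod N)) →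
      (∀ r, (e.cfg t).pos r = b + (j : ZMod N) → (e.cfg t).light r = C3.White) →
      (∃ k : ℕ, 1 ≤ k ∧ k ≤ phi ∧
        occupiedNode (e.cfg t) (b + (j : ZMod N) - (k : ZMod N))) ∧
      (∃ k : ℕ, 1 ≤ k ∧ k ≤ phi ∧
        occupiedNode (e.cfg t) (b + (j : ZMod N) + (k : ZMod N)))

/-- Robots that are White at time `t+1` were White, with the same position,
at time `t`. -/
lemma white_back {t : ℕ} (hI : Inv Minit e b t) (x : Fin R)
    (hw : (e.cfg (t+1)).light x = C3.White) :
    (e.cfg t).light x = C3.White ∧ (e.cfg (t+1)).pos x = (e.cfg t).pos x := by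
  rcases e.step t x with ⟨hp, hl, -⟩ | ⟨-, hp, hl, -⟩ |
    ⟨c, u, hpl, hp, hl, -⟩ | ⟨c, u, hpl, hp, hl, -⟩
  · exact ⟨hl ▸ hw, hp⟩
  · exact ⟨hl ▸ hw, hp⟩
  · have hc : c = C3.White := hl ▸ hw
    exact ⟨((hI.h3 x c u hpl).2.2.1 hc).2, hp⟩
  · have hc : c = C3.White := hl ▸ hw
    obtain ⟨hu, hlw⟩ := (hI.h3 x c u hpl).2.2.1 hc
    exact ⟨hlw, hp.trans hu⟩

lemma colorOf_flip {i j : ℕ} (h : i % 2 ≠ j % 2) :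
    (colorOf i = C3.Red → colorOf j = C3.Blue) ∧
    (colorOf i = C3.Blue → colorOf j = C3.Red) := by
  constructor
  · intro hc
    have h1 := even_of_colorOf_red hc
    rw [Nat.even_iff] at h1
    apply colorOf_blue; rw [Nat.even_iff]; omega
  · intro hc
    have h1 := odd_of_colorOf_blue hc
    rw [Nat.even_iff] at h1
    apply colorOf_red; rw [Nat.even_iff]; omega

lemma rulesSpec (hN : 3 ≤ N) (hphi : 1 ≤ phi) (hgeo : Minit + phi ≤ N)
    (hModd : Odd Minit) {t : ℕ}
    (hI : Inv Minit e b t) (r : Fin R) (hplan : e.plan t r = none)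
    (ε : ZMod N) (hε : ε = 1 ∨ ε = -1)
    (w : ℤ → Set C3)
    (hw : ∀ k : ℤ, |k| ≤ (phi : ℤ) →
        w k = colorsAt (e.cfg t) ((e.cfg t).pos r + ε * ((k : ZMod N))))
    (hneg : ∀ k : ℤ, 1 ≤ k → k ≤ (phi : ℤ) → w (-k) = ∅)
    (c' : C3) (m : SignType)
    (hout : algo1Rules phi ((e.cfg t).light r) w = (c', m)) :
    ∀ u : ZMod N, u = (e.cfg t).pos r + ε * ((m : ℤ) : ZMod N) →
      off b u < Minit ∧
      (u = (e.cfg t).pos r ∨ u = (e.cfg t).pos r + 1 ∨ u = (e.cfg t).pos r - 1) ∧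
      (c' = C3.White → u = (e.cfg t).pos r ∧ (e.cfg t).light r = C3.White) ∧
      (c' ≠ C3.White → c' = colorOf (off b u)) ∧
      (u ≠ (e.cfg t).pos r → ∀ r', (e.cfg t).pos r' = (e.cfg t).pos r →
          (e.cfg t).light r' ≠ C3.White) ∧
      (u ≠ (e.cfg t).pos r → ∀ k : ℕ, 1 ≤ k → k ≤ phi →
          ¬ occupiedNode (e.cfg t)
            ((e.cfg t).pos r + ((e.cfg t).pos r - u) * (k : ZMod N))) := by
  haveI : NeZero N := ⟨by omega⟩
  haveI : Fact (1 < N) := ⟨by omega⟩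
  set pos := (e.cfg t).pos r with hposdef
  have hadd1 : ∀ v : ZMod N, v + 1 ≠ v := by
    intro v h
    exact one_ne_zero (left_eq_add.mp h.symm)
  have hsub1 : ∀ v : ZMod N, v - 1 ≠ v := by
    intro v h
    exact one_ne_zero (sub_eq_self.mp h)
  have hjM : off b pos < Minit := hI.h1 r
  set j := off b pos with hjdef
  have hMN : Minit ≤ N := by omega
  have hjN : j < N := by omega
  have hpos : pos = b + (j : ZMod N) := off_spec b pos
  have hv0 : w 0 = colorsAt (e.cfg t) pos := by
    rw [hw 0 (by simp)]; simp
  have hnegk : ∀ k : ℕ, 1 ≤ k → k ≤ phi →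
      colorsAt (e.cfg t) (pos - ε * (k : ZMod N)) = ∅ := by
    intro k h1 h2
    have h3 := hneg (k : ℤ) (by exact_mod_cast h1) (by exact_mod_cast h2)
    rw [hw (-(k : ℤ)) (by rw [abs_neg, Int.abs_natCast]; exact_mod_cast h2)] at h3
    rw [← h3]; congr 1; push_cast; ring
  have hG6 : ∀ u : ZMod N, u = pos + ε → ∀ k : ℕ, 1 ≤ k → k ≤ phi →
      ¬ occupiedNode (e.cfg t) (pos + (pos - u) * (k : ZMod N)) := by
    intro u hu k h1 h2
    have heq : pos + (pos - u) * (k : ZMod N) = pos - ε * (k : ZMod N) := by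
      rw [hu]; ring
    rw [heq]
    exact not_occupied_of_colors_empty (hnegk k h1 h2)
  have hG5 : ∀ cc : C3, cc ≠ C3.White → w 0 = {cc} →
      ∀ r', (e.cfg t).pos r' = pos → (e.cfg t).light r' ≠ C3.White := by
    intro cc hcc h0 r' hr'
    have hmem : (e.cfg t).light r' ∈ colorsAt (e.cfg t) pos := light_mem_colorsAt hr'
    rw [← hv0, h0, Set.mem_singleton_iff] at hmem
    rw [hmem]; exact hcc
  have hself : ∀ cc : C3, (e.cfg t).light r = cc → cc ≠ C3.White → colorOf j = cc := by
    intro cc hl hcc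
    rcases hI.h2 r with h | h | ⟨c0, u0, hpl0, -⟩
    · exact absurd (hl.symm.trans h) hcc
    · exact h.symm.trans hl
    · rw [hplan] at hpl0; cases hpl0
  have hside : ∀ k : ℕ, 1 ≤ k → k ≤ phi →
      occupiedNode (e.cfg t) (pos + ε * (k : ZMod N)) →
      (ε = 1 → j + k < Minit) ∧ (ε = -1 → k ≤ j) := by
    intro k h1 h2 hocc
    constructor
    · intro he
      have hnode : pos + ε * (k : ZMod N) = b + ((j + k : ℕ) : ZMod N) := by
        rw [hpos, he]; push_cast; ring
      obtain ⟨x, hx⟩ := hocc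
      have hx1 := hI.h1 x
      rw [hx, hnode, off_add b (by omega : j + k < N)] at hx1
      omega
    · intro he
      by_contra hkj
      have hnode : pos + ε * (k : ZMod N) = b - (((k - j : ℕ)) : ZMod N) := by
        rw [hpos, he]; push_cast [Nat.cast_sub (by omega : j ≤ k)]; ring
      obtain ⟨x, hx⟩ := hocc
      have hx1 := hI.h1 x
      rw [hx, hnode, off_sub b (by omega) (by omega)] at hx1
      omega
  have hmove : ∀ cc : C3, (e.cfg t).light r = cc → (cc = C3.Red ∨ cc = C3.Blue) →
      (∃ k : ℕ, 1 ≤ k ∧ k ≤ phi ∧ occupiedNode (e.cfg t) (pos + ε * (k : ZMod N))) →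
      ∀ u : ZMod N, u = pos + ε →
        off b u < Minit ∧ (u = pos + 1 ∨ u = pos - 1) ∧
        (cc = C3.Red → colorOf (off b u) = C3.Blue) ∧
        (cc = C3.Blue → colorOf (off b u) = C3.Red) ∧ u ≠ pos := by
    rintro cc hl hcc ⟨k, h1, h2, hocc⟩ u hu
    have hccW : cc ≠ C3.White := by rcases hcc with h | h <;> subst h <;> intro hcon <;> cases hcon
    have hpar : colorOf j = cc := hself cc hl hccW
    have hb := hside k h1 h2 hocc
    rcases hε with he | he
    · have hjk : j + 1 < Minit := by have := hb.1 he; omega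
      have hoffu : off b u = j + 1 := by
        have hunode : u = b + ((j + 1 : ℕ) : ZMod N) := by
          rw [hu, hpos, he]; push_cast; ring
        rw [hunode, off_add b (by omega)]
      have hflip := colorOf_flip (i := j) (j := j + 1) (by omega)
      refine ⟨by omega, Or.inl (by rw [hu, he]), ?_, ?_, ?_⟩
      · intro h; rw [hoffu]; exact hflip.1 (h ▸ hpar)
      · intro h; rw [hoffu]; exact hflip.2 (h ▸ hpar)
      · rw [hu, he]; exact hadd1 pos
    · have hkj : k ≤ j := hb.2 he
      have hj1 : 1 ≤ j := by omega
      have hoffu : off b u = j - 1 := by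
        have hunode : u = b + ((j - 1 : ℕ) : ZMod N) := by
          rw [hu, hpos, he]; push_cast [Nat.cast_sub hj1]; ring
        rw [hunode, off_add b (by omega)]
      have hflip := colorOf_flip (i := j) (j := j - 1) (by omega)
      have husub : u = pos - 1 := by rw [hu, he]; ring
      refine ⟨by omega, Or.inr husub, ?_, ?_, ?_⟩
      · intro h; rw [hoffu]; exact hflip.1 (h ▸ hpar)
      · intro h; rw [hoffu]; exact hflip.2 (h ▸ hpar)
      · rw [husub]; exact hsub1 pos
  have hv1 : |(1 : ℤ)| ≤ (phi : ℤ) := by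
    rw [abs_one]; exact_mod_cast hphi
  have hoccmem : ∀ {c : C3} {x : ZMod N}, c ∈ colorsAt (e.cfg t) x →
      occupiedNode (e.cfg t) x := by
    rintro c x ⟨r'', h'', -⟩; exact ⟨r'', h''⟩
  -- extract an occupied node on the positive side from a nonempty view cell
  have hposocc : ∀ k : ℤ, 1 ≤ k → k ≤ (phi : ℤ) → w k ≠ ∅ →
      ∃ k' : ℕ, 1 ≤ k' ∧ k' ≤ phi ∧
        occupiedNode (e.cfg t) (pos + ε * ((k' : ℕ) : ZMod N)) := by
    intro k h1 h2 hne
    refine ⟨k.toNat, by omega, by omega, ?_⟩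
    have hk : ((k.toNat : ℕ) : ℤ) = k := Int.toNat_of_nonneg (by omega)
    rw [hw k (by rw [abs_of_nonneg (by omega : (0:ℤ) ≤ k)]; exact h2)] at hne
    have : ((k : ZMod N)) = ((k.toNat : ℕ) : ZMod N) := by
      rw [← hk]; simp
    rw [this] at hne
    exact occupied_of_colors_ne hne
  intro u hu
  unfold algo1Rules at hout
  split_ifs at hout with hr1 hr2a hr2b hr3a hr3b hr4a hr4b hr5
  -- R1
  · injection hout with hc hm; subst hc; subst hm
    have hupos : u = pos := by rw [hu]; simp
    have hAW : ∀ x, (e.cfg t).pos x = pos → (e.cfg t).light x = C3.White := by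
      intro x hx
      have hmem : (e.cfg t).light x ∈ colorsAt (e.cfg t) pos := light_mem_colorsAt hx
      rw [← hv0, hr1.2, Set.mem_singleton_iff] at hmem
      exact hmem
    have hpar : Even j := by
      by_cases hb2 : 1 ≤ j ∧ j + 1 + 1 ≤ Minit
      · exfalso
        obtain ⟨⟨k0, hk01, hk0p, hL⟩, ⟨k1, hk11, hk1p, hR⟩⟩ :=
          hI.hI4 j hb2.1 (by omega) ⟨r, hpos⟩
            (fun x hx => hAW x (hx.trans hpos.symm))
        rcases hε with he | he
        · apply not_occupied_of_colors_empty (hnegk k0 hk01 hk0p)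
          have heq : b + (j : ZMod N) - (k0 : ZMod N) = pos - ε * (k0 : ZMod N) := by
            rw [hpos, he]; ring
          rw [← heq]; exact hL
        · apply not_occupied_of_colors_empty (hnegk k1 hk11 hk1p)
          have heq : b + (j : ZMod N) + (k1 : ZMod N) = pos - ε * (k1 : ZMod N) := by
            rw [hpos, he]; ring
          rw [← heq]; exact hR
      · rcases hModd with ⟨mm, hmm⟩
        have hj0 : j = 0 ∨ j = Minit - 1 := by omega
        rcases hj0 with h | h
        · rw [h]; exact Even.zero
        · exact ⟨mm, by omega⟩
    refine ⟨by rw [hupos]; exact hjM, Or.inl hupos, fun h => C3.noConfusion h,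
      fun _ => by rw [hupos]; exact (colorOf_red hpar).symm,
      fun hne => absurd hupos hne, fun hne => absurd hupos hne⟩
  -- R2a
  · injection hout with hc hm; subst hc; subst hm
    have hu' : u = pos + ε := by rw [hu]; simp
    have hexk : ∃ k : ℕ, 1 ≤ k ∧ k ≤ phi ∧
        occupiedNode (e.cfg t) (pos + ε * ((k : ℕ) : ZMod N)) := by
      rcases hr2a.2.2.1 with h1 | h1
      · have hnall := hr2a.2.2.2
        push_neg at hnall
        obtain ⟨k, hk2, hkp, hkne⟩ := hnall
        exact hposocc k (by omega) hkp (Set.nonempty_iff_ne_empty.mp hkne)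
      · refine hposocc 1 le_rfl (by exact_mod_cast hphi) ?_
        rw [h1]; exact Set.singleton_ne_empty _
    obtain ⟨hoffM, hadj2, hparR, hparB, hune⟩ :=
      hmove C3.Red hr2a.1 (Or.inl rfl) hexk u hu'
    exact ⟨hoffM, Or.inr hadj2, fun h => C3.noConfusion h,
      fun _ => (hparR rfl).symm, fun _ => hG5 C3.Red (fun h => C3.noConfusion h) hr2a.2.1,
      fun _ => hG6 u hu'⟩
  -- R2b
  · injection hout with hc hm; subst hc; subst hm
    have hu' : u = pos + ε := by rw [hu]; simp
    have hexk : ∃ k : ℕ, 1 ≤ k ∧ k ≤ phi ∧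
        occupiedNode (e.cfg t) (pos + ε * ((k : ℕ) : ZMod N)) := by
      refine hposocc 1 le_rfl (by exact_mod_cast hphi) ?_
      intro hE; rw [hE] at hr2b; exact hr2b.2.2.1
    obtain ⟨hoffM, hadj2, hparR, hparB, hune⟩ :=
      hmove C3.Red hr2b.1 (Or.inl rfl) hexk u hu'
    exact ⟨hoffM, Or.inr hadj2, fun h => C3.noConfusion h,
      fun _ => (hparR rfl).symm, fun _ => hG5 C3.Red (fun h => C3.noConfusion h) hr2b.2.1,
      fun _ => hG6 u hu'⟩
  -- R3a
  · injection hout with hc hm; subst hc; subst hm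
    have hu' : u = pos + ε := by rw [hu]; simp
    have hexk : ∃ k : ℕ, 1 ≤ k ∧ k ≤ phi ∧
        occupiedNode (e.cfg t) (pos + ε * ((k : ℕ) : ZMod N)) := by
      rcases hr3a.2.2.1 with h1 | h1
      · have hnall := hr3a.2.2.2
        push_neg at hnall
        obtain ⟨k, hk2, hkp, hkne⟩ := hnall
        exact hposocc k (by omega) hkp (Set.nonempty_iff_ne_empty.mp hkne)
      · refine hposocc 1 le_rfl (by exact_mod_cast hphi) ?_
        rw [h1]; exact Set.singleton_ne_empty _
    obtain ⟨hoffM, hadj2, hparR, hparB, hune⟩ :=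
      hmove C3.Blue hr3a.1 (Or.inr rfl) hexk u hu'
    exact ⟨hoffM, Or.inr hadj2, fun h => C3.noConfusion h,
      fun _ => (hparB rfl).symm, fun _ => hG5 C3.Blue (fun h => C3.noConfusion h) hr3a.2.1,
      fun _ => hG6 u hu'⟩
  -- R3b
  · injection hout with hc hm; subst hc; subst hm
    have hu' : u = pos + ε := by rw [hu]; simp
    have hexk : ∃ k : ℕ, 1 ≤ k ∧ k ≤ phi ∧
        occupiedNode (e.cfg t) (pos + ε * ((k : ℕ) : ZMod N)) := by
      refine hposocc 1 le_rfl (by exact_mod_cast hphi) ?_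
      intro hE; rw [hE] at hr3b; exact hr3b.2.2.1
    obtain ⟨hoffM, hadj2, hparR, hparB, hune⟩ :=
      hmove C3.Blue hr3b.1 (Or.inr rfl) hexk u hu'
    exact ⟨hoffM, Or.inr hadj2, fun h => C3.noConfusion h,
      fun _ => (hparB rfl).symm, fun _ => hG5 C3.Blue (fun h => C3.noConfusion h) hr3b.2.1,
      fun _ => hG6 u hu'⟩
  -- R4a
  · injection hout with hc hm; subst hc; subst hm
    have hupos : u = pos := by rw [hu]; simp
    have hmem : C3.Red ∈ colorsAt (e.cfg t) pos := by rw [← hv0]; exact hr4a.2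
    obtain ⟨r', hr'p, hr'l⟩ := hmem
    have hparred : colorOf j = C3.Red := by
      rcases hI.h2 r' with h | h | ⟨c0, u0, hpl0, hl0⟩
      · rw [hr'l] at h; cases h
      · rw [hr'p] at h; exact h.symm.trans hr'l
      · have hc0 : c0 = C3.Red := hl0.symm.trans hr'l
        obtain ⟨hoff0, hadj0, -, hpar0⟩ := hI.h3 r' c0 u0 hpl0
        rcases hadj0 with h0 | h0 | h0
        · have hcol := hpar0 (by rw [hc0]; exact fun h => C3.noConfusion h)
          rw [hc0, h0, hr'p] at hcol
          exact hcol.symm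
        · exfalso
          have hne : u0 ≠ (e.cfg t).pos r' := by rw [h0]; exact hadd1 _
          exact hI.hM r' c0 u0 hpl0 hne r hr'p.symm hr4a.1
        · exfalso
          have hne : u0 ≠ (e.cfg t).pos r' := by rw [h0]; exact hsub1 _
          exact hI.hM r' c0 u0 hpl0 hne r hr'p.symm hr4a.1
    refine ⟨by rw [hupos]; exact hjM, Or.inl hupos, fun h => C3.noConfusion h,
      fun _ => by rw [hupos]; exact hparred.symm,
      fun hne => absurd hupos hne, fun hne => absurd hupos hne⟩
  -- R4b
  · injection hout with hc hm; subst hc; subst hm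
    have hupos : u = pos := by rw [hu]; simp
    have hmem : C3.Blue ∈ colorsAt (e.cfg t) pos := by rw [← hv0]; exact hr4b.2
    obtain ⟨r', hr'p, hr'l⟩ := hmem
    have hparblue : colorOf j = C3.Blue := by
      rcases hI.h2 r' with h | h | ⟨c0, u0, hpl0, hl0⟩
      · rw [hr'l] at h; cases h
      · rw [hr'p] at h; exact h.symm.trans hr'l
      · have hc0 : c0 = C3.Blue := hl0.symm.trans hr'l
        obtain ⟨hoff0, hadj0, -, hpar0⟩ := hI.h3 r' c0 u0 hpl0
        rcases hadj0 with h0 | h0 | h0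
        · have hcol := hpar0 (by rw [hc0]; exact fun h => C3.noConfusion h)
          rw [hc0, h0, hr'p] at hcol
          exact hcol.symm
        · exfalso
          have hne : u0 ≠ (e.cfg t).pos r' := by rw [h0]; exact hadd1 _
          exact hI.hM r' c0 u0 hpl0 hne r hr'p.symm hr4b.1
        · exfalso
          have hne : u0 ≠ (e.cfg t).pos r' := by rw [h0]; exact hsub1 _
          exact hI.hM r' c0 u0 hpl0 hne r hr'p.symm hr4b.1
    refine ⟨by rw [hupos]; exact hjM, Or.inl hupos, fun h => C3.noConfusion h,
      fun _ => by rw [hupos]; exact hparblue.symm,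
      fun hne => absurd hupos hne, fun hne => absurd hupos hne⟩
  -- R5
  · injection hout with hc hm; subst hc; subst hm
    have hu' : u = pos + ε := by rw [hu]; simp
    have hexk : ∃ k : ℕ, 1 ≤ k ∧ k ≤ phi ∧
        occupiedNode (e.cfg t) (pos + ε * ((k : ℕ) : ZMod N)) := by
      refine hposocc 1 le_rfl (by exact_mod_cast hphi) ?_
      rw [hr5.2.2.1]; exact Set.singleton_ne_empty _
    obtain ⟨hoffM, hadj2, hparR, hparB, hune⟩ :=
      hmove C3.Red hr5.1 (Or.inl rfl) hexk u hu'
    exact ⟨hoffM, Or.inr hadj2, fun h => C3.noConfusion h,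
      fun _ => (hparR rfl).symm, fun _ => hG5 C3.Red (fun h => C3.noConfusion h) hr5.2.1,
      fun _ => hG6 u hu'⟩
  -- default
  · injection hout with hc hm; subst hc; subst hm
    have hupos : u = pos := by rw [hu]; simp
    refine ⟨by rw [hupos]; exact hjM, Or.inl hupos, fun h => ⟨hupos, h⟩, ?_,
      fun hne => absurd hupos hne, fun hne => absurd hupos hne⟩
    intro h
    rcases hI.h2 r with hh | hh | ⟨c0, u0, hpl0, -⟩
    · exact absurd hh h
    · rw [hupos]; exact hh
    · rw [hplan] at hpl0; cases hpl0

lemma lookSpec (hN : 3 ≤ N) (hphi : 1 ≤ phi) (hgeo : Minit + phi ≤ N)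
    (hModd : Odd Minit) {t : ℕ} (hI : Inv Minit e b t) (r : Fin R)
    (hplan : e.plan t r = none) (dir : Bool) (c' : C3) (m : SignType)
    (hout : (algo1 phi).out ((e.cfg t).light r)
        (nodeView phi (e.cfg t) ((e.cfg t).pos r) dir) = (c', m)) :
    ∀ u : ZMod N, u = moveTarget ((e.cfg t).pos r) dir m →
      off b u < Minit ∧
      (u = (e.cfg t).pos r ∨ u = (e.cfg t).pos r + 1 ∨ u = (e.cfg t).pos r - 1) ∧
      (c' = C3.White → u = (e.cfg t).pos r ∧ (e.cfg t).light r = C3.White) ∧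
      (c' ≠ C3.White → c' = colorOf (off b u)) ∧
      (u ≠ (e.cfg t).pos r → ∀ r', (e.cfg t).pos r' = (e.cfg t).pos r →
          (e.cfg t).light r' ≠ C3.White) ∧
      (u ≠ (e.cfg t).pos r → ∀ k : ℕ, 1 ≤ k → k ≤ phi →
          ¬ occupiedNode (e.cfg t)
            ((e.cfg t).pos r + ((e.cfg t).pos r - u) * (k : ZMod N))) := by
  haveI : NeZero N := ⟨by omega⟩
  set pos := (e.cfg t).pos r with hposdef
  set v := nodeView phi (e.cfg t) pos dir with hvdef
  have hvk : ∀ k : ℤ, |k| ≤ (phi : ℤ) → v k =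
      colorsAt (e.cfg t) (pos + (if dir then ((k : ZMod N)) else (((-k : ℤ) : ZMod N)))) := by
    intro k hk
    rw [hvdef]; unfold nodeView; rw [if_pos hk]
  have hsneg : ∀ s : SignType, ((-s : SignType) : ℤ) = -(s : ℤ) := by
    intro s; cases s <;> simp
  have hstay : ∀ u : ZMod N, u = moveTarget pos dir 0 → u = pos := by
    intro u hu; rw [hu]; unfold moveTarget; cases dir <;> simp
  have hdefault : ∀ u : ZMod N, u = pos →
      off b u < Minit ∧
      (u = pos ∨ u = pos + 1 ∨ u = pos - 1) ∧
      ((e.cfg t).light r = C3.White → u = pos ∧ (e.cfg t).light r = C3.White) ∧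
      ((e.cfg t).light r ≠ C3.White → (e.cfg t).light r = colorOf (off b u)) ∧
      (u ≠ pos → ∀ r', (e.cfg t).pos r' = pos → (e.cfg t).light r' ≠ C3.White) ∧
      (u ≠ pos → ∀ k : ℕ, 1 ≤ k → k ≤ phi →
          ¬ occupiedNode (e.cfg t) (pos + (pos - u) * (k : ZMod N))) := by
    intro u hupos
    refine ⟨by rw [hupos]; exact hI.h1 r, Or.inl hupos, fun h => ⟨hupos, h⟩, ?_,
      fun hne => absurd hupos hne, fun hne => absurd hupos hne⟩
    intro h
    rcases hI.h2 r with hh | hh | ⟨c0, u0, hpl0, -⟩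
    · exact absurd hh h
    · rw [hupos]; exact hh
    · rw [hplan] at hpl0; cases hpl0
  have hout' : (if (∀ k : ℤ, 1 ≤ k → k ≤ (phi : ℤ) → v (-k) = ∅) ∧
       (∀ k : ℤ, 1 ≤ k → k ≤ (phi : ℤ) → v k = ∅) then ((e.cfg t).light r, (0 : SignType))
    else if ∀ k : ℤ, 1 ≤ k → k ≤ (phi : ℤ) → v (-k) = ∅ then
      algo1Rules phi ((e.cfg t).light r) v
    else if ∀ k : ℤ, 1 ≤ k → k ≤ (phi : ℤ) → v k = ∅ then
      ((algo1Rules phi ((e.cfg t).light r) (fun k => v (-k))).1,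
        -(algo1Rules phi ((e.cfg t).light r) (fun k => v (-k))).2)
    else ((e.cfg t).light r, 0)) = (c', m) := hout
  clear hout
  split_ifs at hout' with hAB hA hB
  -- R0 : alone
  · injection hout' with hc hm; subst hc; subst hm
    intro u hu
    exact hdefault u (hstay u hu)
  -- rules, oriented with dir
  · have hneg : ∀ k : ℤ, 1 ≤ k → k ≤ (phi : ℤ) → v (-k) = ∅ := hA
    cases dir
    · -- dir = false : ε = -1
      have hw : ∀ k : ℤ, |k| ≤ (phi : ℤ) →
          v k = colorsAt (e.cfg t) (pos + (-1 : ZMod N) * ((k : ZMod N))) := by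
        intro k hk; rw [hvk k hk]
        congr 1
        simp only [Bool.false_eq_true, if_false]
        push_cast; ring
      intro u hu
      have hu' : u = pos + (-1 : ZMod N) * ((m : ℤ) : ZMod N) := by
        rw [hu]; unfold moveTarget
        simp only [Bool.false_eq_true, if_false]
        push_cast; ring
      exact rulesSpec hN hphi hgeo hModd hI r hplan (-1 : ZMod N) (Or.inr rfl) v hw hneg
        c' m hout' u hu'
    · -- dir = true : ε = 1
      have hw : ∀ k : ℤ, |k| ≤ (phi : ℤ) →
          v k = colorsAt (e.cfg t) (pos + (1 : ZMod N) * ((k : ZMod N))) := by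
        intro k hk; rw [hvk k hk]
        congr 1
        simp only [if_true]
        ring
      intro u hu
      have hu' : u = pos + (1 : ZMod N) * ((m : ℤ) : ZMod N) := by
        rw [hu]; unfold moveTarget
        simp only [if_true]
        ring
      exact rulesSpec hN hphi hgeo hModd hI r hplan (1 : ZMod N) (Or.inl rfl) v hw hneg
        c' m hout' u hu'
  -- rules, reversed orientation
  · set P := algo1Rules phi ((e.cfg t).light r) (fun k => v (-k)) with hPdef
    have houtP : algo1Rules phi ((e.cfg t).light r) (fun k => v (-k)) = (P.1, P.2) := rfl
    injection hout' with hc hm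
    have hneg' : ∀ k : ℤ, 1 ≤ k → k ≤ (phi : ℤ) → (fun k => v (-k)) (-k) = ∅ := by
      intro k h1 h2
      show v (-(-k)) = ∅
      rw [neg_neg]; exact hB k h1 h2
    cases dir
    · -- dir = false : reversed ε = 1
      have hw : ∀ k : ℤ, |k| ≤ (phi : ℤ) →
          (fun k => v (-k)) k = colorsAt (e.cfg t) (pos + (1 : ZMod N) * ((k : ZMod N))) := by
        intro k hk
        show v (-k) = _
        rw [hvk (-k) (by rw [abs_neg]; exact hk)]
        congr 1
        simp only [Bool.false_eq_true, if_false]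
        push_cast; ring
      intro u hu
      have hu' : u = pos + (1 : ZMod N) * ((P.2 : ℤ) : ZMod N) := by
        rw [hu, ← hm]; unfold moveTarget
        simp only [Bool.false_eq_true, if_false]
        rw [hsneg]
        push_cast; ring
      have H := rulesSpec hN hphi hgeo hModd hI r hplan (1 : ZMod N) (Or.inl rfl) _ hw hneg'
        P.1 P.2 houtP u hu'
      rw [← hc]
      exact H
    · -- dir = true : reversed ε = -1
      have hw : ∀ k : ℤ, |k| ≤ (phi : ℤ) →
          (fun k => v (-k)) k = colorsAt (e.cfg t) (pos + (-1 : ZMod N) * ((k : ZMod N))) := by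
        intro k hk
        show v (-k) = _
        rw [hvk (-k) (by rw [abs_neg]; exact hk)]
        congr 1
        simp only [if_true]
        push_cast; ring
      intro u hu
      have hu' : u = pos + (-1 : ZMod N) * ((P.2 : ℤ) : ZMod N) := by
        rw [hu, ← hm]; unfold moveTarget
        simp only [if_true]
        rw [hsneg]
        push_cast; ring
      have H := rulesSpec hN hphi hgeo hModd hI r hplan (-1 : ZMod N) (Or.inr rfl) _ hw hneg'
        P.1 P.2 houtP u hu'
      rw [← hc]
      exact H
  -- stuck
  · injection hout' with hc hm; subst hc; subst hm
    intro u hu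
    exact hdefault u (hstay u hu)

lemma inv_step (hN : 3 ≤ N) (hphi : 1 ≤ phi) (hgeo : Minit + phi ≤ N)
    (hModd : Odd Minit) {t : ℕ} (hI : Inv Minit e b t) : Inv Minit e b (t + 1) := by
  haveI : NeZero N := ⟨by omega⟩
  haveI : Fact (1 < N) := ⟨by omega⟩
  have hadd1 : ∀ v : ZMod N, v + 1 ≠ v := by
    intro v h; exact one_ne_zero (left_eq_add.mp h.symm)
  have hsub1 : ∀ v : ZMod N, v - 1 ≠ v := by
    intro v h; exact one_ne_zero (sub_eq_self.mp h)
  refine ⟨?_, ?_, ?_, ?_, ?_, ?_⟩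
  -- h1
  · intro r
    rcases e.step t r with ⟨hp, -, -⟩ | ⟨-, hp, -, -⟩ | ⟨c, u, -, hp, -, -⟩ |
      ⟨c, u, hpl, hp, -, -⟩
    · rw [hp]; exact hI.h1 r
    · rw [hp]; exact hI.h1 r
    · rw [hp]; exact hI.h1 r
    · rw [hp]; exact (hI.h3 r c u hpl).1
  -- h2
  · intro r
    rcases e.step t r with ⟨hp, hl, hpl⟩ | ⟨hpl0, hp, hl, dir, hpls⟩ |
      ⟨c, u, hpl, hp, hl, hpl'⟩ | ⟨c, u, hpl, hp, hl, hpl'⟩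
    · rw [hl, hp, hpl]; exact hI.h2 r
    · rw [hl, hp]
      rcases hI.h2 r with h | h | ⟨c, u, h, -⟩
      · exact Or.inl h
      · exact Or.inr (Or.inl h)
      · rw [hpl0] at h; cases h
    · by_cases hc : c = C3.White
      · left; rw [hl, hc]
      · right; right; exact ⟨c, u, hpl', hl⟩
    · by_cases hc : c = C3.White
      · left; rw [hl, hc]
      · right; left
        rw [hl, hp]
        exact (hI.h3 r c u hpl).2.2.2 hc
  -- h3
  · intro r c u hplan1
    rcases e.step t r with ⟨hp, hl, hpl⟩ | ⟨hpl0, hp, hl, dir, hpls⟩ |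
      ⟨c0, u0, hpl, hp, hl, hpl'⟩ | ⟨c0, u0, hpl, hp, hl, hpl'⟩
    · rw [hpl] at hplan1
      rw [hp, hl]
      exact hI.h3 r c u hplan1
    · rw [hplan1] at hpls
      injection hpls with hcu
      injection hcu with hc1 hu1
      obtain ⟨Ha, Hb, Hc, Hd, -, -⟩ :=
        lookSpec hN hphi hgeo hModd hI r hpl0 dir _ _ rfl u hu1
      rw [hp, hl, hc1]
      exact ⟨Ha, Hb, Hc, Hd⟩
    · rw [hplan1] at hpl'
      injection hpl' with hcu
      injection hcu with hc1 hu1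
      subst hc1; subst hu1
      obtain ⟨Ha, Hb, Hc, Hd⟩ := hI.h3 r c u hpl
      rw [hp, hl]
      exact ⟨Ha, Hb, fun h => ⟨(Hc h).1, h⟩, Hd⟩
    · rw [hplan1] at hpl'; cases hpl'
  -- hM
  · intro r c u hplan1 hne r' hr' hwl
    obtain ⟨hw0, hp'⟩ := white_back hI r' hwl
    rcases e.step t r with ⟨hp, hl, hpl⟩ | ⟨hpl0, hp, hl, dir, hpls⟩ |
      ⟨c0, u0, hpl, hp, hl, hpl'⟩ | ⟨c0, u0, hpl, hp, hl, hpl'⟩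
    · rw [hpl] at hplan1
      rw [hp] at hne
      exact hI.hM r c u hplan1 hne r' (by rw [← hp', hr', hp]) hw0
    · rw [hplan1] at hpls
      injection hpls with hcu
      injection hcu with hc1 hu1
      obtain ⟨-, -, -, -, H5, -⟩ :=
        lookSpec hN hphi hgeo hModd hI r hpl0 dir _ _ rfl u hu1
      rw [hp] at hne
      exact H5 hne r' (by rw [← hp', hr', hp]) hw0
    · rw [hplan1] at hpl'
      injection hpl' with hcu
      injection hcu with hc1 hu1
      subst hc1; subst hu1
      rw [hp] at hne
      exact hI.hM r c u hpl hne r' (by rw [← hp', hr', hp]) hw0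
    · rw [hplan1] at hpl'; cases hpl'
  -- hD
  · intro r c u hplan1 hne k hk1 hk2 r' hwl
    obtain ⟨hw0, hp'⟩ := white_back hI r' hwl
    intro hbad
    rcases e.step t r with ⟨hp, hl, hpl⟩ | ⟨hpl0, hp, hl, dir, hpls⟩ |
      ⟨c0, u0, hpl, hp, hl, hpl'⟩ | ⟨c0, u0, hpl, hp, hl, hpl'⟩
    · rw [hpl] at hplan1
      rw [hp] at hne hbad
      exact hI.hD r c u hplan1 hne k hk1 hk2 r' hw0 (hp'.symm.trans hbad)
    · rw [hplan1] at hpls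
      injection hpls with hcu
      injection hcu with hc1 hu1
      obtain ⟨-, -, -, -, -, H6⟩ :=
        lookSpec hN hphi hgeo hModd hI r hpl0 dir _ _ rfl u hu1
      rw [hp] at hne hbad
      exact H6 hne k hk1 hk2 ⟨r', hp'.symm.trans hbad⟩
    · rw [hplan1] at hpl'
      injection hpl' with hcu
      injection hcu with hc1 hu1
      subst hc1; subst hu1
      rw [hp] at hne hbad
      exact hI.hD r c u hpl hne k hk1 hk2 r' hw0 (hp'.symm.trans hbad)
    · rw [hplan1] at hpl'; cases hpl'
  -- hI4
  · intro j hj1 hj2 hocc1 hAW1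
    obtain ⟨y, hy⟩ := hocc1
    have hyW : (e.cfg (t+1)).light y = C3.White := hAW1 y hy
    obtain ⟨hyW0, hyp⟩ := white_back hI y hyW
    have hy0 : (e.cfg t).pos y = b + (j : ZMod N) := by rw [← hyp]; exact hy
    have hAW0 : ∀ x, (e.cfg t).pos x = b + (j : ZMod N) →
        (e.cfg t).light x = C3.White := by
      intro x hx
      by_contra hxc
      rcases e.step t x with ⟨hp, hl, -⟩ | ⟨-, hp, hl, -⟩ |
        ⟨c0, u0, hpl, hp, hl, -⟩ | ⟨c0, u0, hpl, hp, hl, -⟩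
      · exact hxc (white_back hI x (hAW1 x (by rw [hp]; exact hx))).1
      · exact hxc (white_back hI x (hAW1 x (by rw [hp]; exact hx))).1
      · exact hxc (white_back hI x (hAW1 x (by rw [hp]; exact hx))).1
      · by_cases hu0 : u0 = (e.cfg t).pos x
        · exact hxc (white_back hI x (hAW1 x (by rw [hp, hu0]; exact hx))).1
        · exact hI.hM x c0 u0 hpl hu0 y (hy0.trans hx.symm) hyW0
    have hocc0 : occupiedNode (e.cfg t) (b + (j : ZMod N)) := ⟨y, hy0⟩
    obtain ⟨⟨k0, hk01, hk0p, hL⟩, ⟨k1, hk11, hk1p, hR⟩⟩ :=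
      hI.hI4 j hj1 hj2 hocc0 hAW0
    constructor
    · obtain ⟨x, hx⟩ := hL
      rcases e.step t x with ⟨hp, hl, -⟩ | ⟨-, hp, hl, -⟩ |
        ⟨c0, u0, hpl, hp, hl, -⟩ | ⟨c0, u0, hpl, hp, hl, -⟩
      · exact ⟨k0, hk01, hk0p, x, hp.trans hx⟩
      · exact ⟨k0, hk01, hk0p, x, hp.trans hx⟩
      · exact ⟨k0, hk01, hk0p, x, hp.trans hx⟩
      · obtain ⟨hoffu, hadj, hcW, -⟩ := hI.h3 x c0 u0 hpl
        rcases hadj with h0 | h0 | h0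
        · exact ⟨k0, hk01, hk0p, x, by rw [hp, h0]; exact hx⟩
        · rcases Nat.eq_or_lt_of_le hk01 with hk0e | hk0gt
          · exfalso
            have hu0 : u0 = b + (j : ZMod N) := by
              rw [h0, hx, ← hk0e]; push_cast; ring
            have hxW : (e.cfg (t+1)).light x = C3.White :=
              hAW1 x (by rw [hp]; exact hu0)
            have hc0W : c0 = C3.White := by rw [← hl]; exact hxW
            have h00 := (hcW hc0W).1
            rw [h0] at h00
            exact hadd1 _ h00
          · refine ⟨k0 - 1, by omega, by omega, x, ?_⟩
            rw [hp, h0, hx]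
            push_cast [Nat.cast_sub (by omega : 1 ≤ k0)]
            ring
        · rcases Nat.lt_or_ge k0 phi with hk0lt | hk0ge
          · refine ⟨k0 + 1, by omega, by omega, x, ?_⟩
            rw [hp, h0, hx]; push_cast; ring
          · exfalso
            have hk0e : k0 = phi := by omega
            have hne : u0 ≠ (e.cfg t).pos x := by rw [h0]; exact hsub1 _
            exact hI.hD x c0 u0 hpl hne phi hphi le_rfl y hyW0
              (by rw [hy0, h0, hx, hk0e]; ring)
    · obtain ⟨x, hx⟩ := hR
      rcases e.step t x with ⟨hp, hl, -⟩ | ⟨-, hp, hl, -⟩ |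
        ⟨c0, u0, hpl, hp, hl, -⟩ | ⟨c0, u0, hpl, hp, hl, -⟩
      · exact ⟨k1, hk11, hk1p, x, hp.trans hx⟩
      · exact ⟨k1, hk11, hk1p, x, hp.trans hx⟩
      · exact ⟨k1, hk11, hk1p, x, hp.trans hx⟩
      · obtain ⟨hoffu, hadj, hcW, -⟩ := hI.h3 x c0 u0 hpl
        rcases hadj with h0 | h0 | h0
        · exact ⟨k1, hk11, hk1p, x, by rw [hp, h0]; exact hx⟩
        · rcases Nat.lt_or_ge k1 phi with hk1lt | hk1ge
          · refine ⟨k1 + 1, by omega, by omega, x, ?_⟩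
            rw [hp, h0, hx]; push_cast; ring
          · exfalso
            have hk1e : k1 = phi := by omega
            have hne : u0 ≠ (e.cfg t).pos x := by rw [h0]; exact hadd1 _
            exact hI.hD x c0 u0 hpl hne phi hphi le_rfl y hyW0
              (by rw [hy0, h0, hx, hk1e]; ring)
        · rcases Nat.eq_or_lt_of_le hk11 with hk1e | hk1gt
          · exfalso
            have hu0 : u0 = b + (j : ZMod N) := by
              rw [h0, hx, ← hk1e]; push_cast; ring
            have hxW : (e.cfg (t+1)).light x = C3.White :=
              hAW1 x (by rw [hp]; exact hu0)
            have hc0W : c0 = C3.White := by rw [← hl]; exact hxW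
            have h00 := (hcW hc0W).1
            rw [h0] at h00
            exact hsub1 _ h00
          · refine ⟨k1 - 1, by omega, by omega, x, ?_⟩
            rw [hp, h0, hx]
            push_cast [Nat.cast_sub (by omega : 1 ≤ k1)]
            ring

lemma seg_le (hN : 3 ≤ N) (hphi : 1 ≤ phi) {cfg : Config N R C3} {Oinit : ℕ}
    (hSeg : SegmentInitOn phi cfg b Minit Oinit) : Minit + phi ≤ N := by
  obtain ⟨hM2, hoccb, hocce, hall, hbord, hchain, -⟩ := hSeg
  have hMN : Minit ≤ N := by
    by_contra hc
    push_neg at hc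
    set i := Minit - 1 - N with hidef
    have hiM : i + 1 < Minit := by omega
    have hnode : b + ((Minit - 1 : ℕ) : ZMod N) = b + (i : ZMod N) := by
      have h4 : ((Minit - 1 : ℕ) : ZMod N) = ((i + N : ℕ) : ZMod N) := by
        congr 1; omega
      rw [h4]; push_cast [ZMod.natCast_self]; ring
    have hocci : occupiedNode cfg (b + (i : ZMod N)) := hnode ▸ hocce
    obtain ⟨j', hij', hj'i, hj'M, hoccj'⟩ := hchain i hiM hocci
    have hk1 : 1 ≤ j' - i := by omega
    have hk2 : j' - i ≤ phi := by omega
    apply (hbord (j' - i) hk1 hk2).2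
    have h7 : b + ((Minit - 1 : ℕ) : ZMod N) + ((j' - i : ℕ) : ZMod N)
        = b + ((j' : ℕ) : ZMod N) := by
      have h5 : ((j' : ℕ) : ZMod N) = ((Minit - 1 + (j' - i) : ℕ) : ZMod N) := by
        have h6 : Minit - 1 + (j' - i) = j' + N := by omega
        rw [h6]; push_cast [ZMod.natCast_self]; ring
      rw [h5]; push_cast; ring
    rw [h7]; exact hoccj'
  by_contra hc
  push_neg at hc
  set k := N - (Minit - 1) with hkdef
  have hk1 : 1 ≤ k := by omega
  have hk2 : k ≤ phi := by omega
  apply (hbord k hk1 hk2).2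
  have h7 : b + ((Minit - 1 : ℕ) : ZMod N) + (k : ZMod N) = b := by
    have h5 : ((Minit - 1 : ℕ) : ZMod N) + (k : ZMod N)
        = ((Minit - 1 + k : ℕ) : ZMod N) := by push_cast; ring
    rw [add_assoc, h5]
    have h6 : Minit - 1 + k = N := by omega
    rw [h6, ZMod.natCast_self, add_zero]
  rw [h7]; exact hoccb

lemma inv_zero (hN : 3 ≤ N) (hphi : 1 ≤ phi) {Oinit : ℕ}
    (hWhite : ∀ r, (e.cfg 0).light r = C3.White)
    (hSeg : SegmentInitOn phi (e.cfg 0) b Minit Oinit)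
    (hgeo : Minit + phi ≤ N) : Inv Minit e b 0 := by
  haveI : NeZero N := ⟨by omega⟩
  obtain ⟨hM2, hoccb, hocce, hall, hbord, hchain, -⟩ := hSeg
  refine ⟨?_, ?_, ?_, ?_, ?_, ?_⟩
  · intro r
    obtain ⟨i, hiM, hu⟩ := hall _ ⟨r, rfl⟩
    rw [hu, off_add b (by omega)]
    exact hiM
  · intro r; exact Or.inl (hWhite r)
  · intro r c u hpl; rw [e.init_plan r] at hpl; cases hpl
  · intro r c u hpl; rw [e.init_plan r] at hpl; cases hpl
  · intro r c u hpl; rw [e.init_plan r] at hpl; cases hpl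
  · intro j hj1 hj2 hoccj _
    constructor
    · classical
      set P : ℕ → Prop := fun i => occupiedNode (e.cfg 0) (b + (i : ZMod N)) with hPdef
      set i0 := Nat.findGreatest P (j - 1) with hi0
      have hP0 : P 0 := by simpa [hPdef] using hoccb
      have hPi0 : P i0 := Nat.findGreatest_spec (Nat.zero_le _) hP0
      have hi0le : i0 ≤ j - 1 := Nat.findGreatest_le _
      obtain ⟨j', hij', hj'i, hj'M, hoccj'⟩ := hchain i0 (by omega) hPi0
      have hj'ge : j ≤ j' := by
        by_contra hlt
        push_neg at hlt
        have : j' ≤ i0 := Nat.le_findGreatest (by omega) hoccj'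
        omega
      refine ⟨j - i0, by omega, by omega, ?_⟩
      have h7 : b + (j : ZMod N) - ((j - i0 : ℕ) : ZMod N) = b + (i0 : ZMod N) := by
        push_cast [Nat.cast_sub (by omega : i0 ≤ j)]; ring
      rw [h7]; exact hPi0
    · obtain ⟨j', hij', hj'i, hj'M, hoccj'⟩ := hchain j (by omega) hoccj
      refine ⟨j' - j, by omega, by omega, ?_⟩
      have h7 : b + (j : ZMod N) + ((j' - j : ℕ) : ZMod N) = b + (j' : ZMod N) := by
        push_cast [Nat.cast_sub (by omega : j ≤ j')]; ring
      rw [h7]; exact hoccj'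

end A1P

/-- **Lemma 5.** Under Algorithm 1, let `h` be the distance from an original
border node `b` of the initial configuration to a node `u_h = b + h` of the
segment `G'`.  If `h` is odd, the border robots come into `u_h` with color
Blue; if `h` is even, they come into `u_h` with color Red. -/
theorem algo1_arrival_parity
    (N R phi Minit Oinit : ℕ) (hN : 3 ≤ N) (hphi : 1 ≤ phi) (hM : Odd Minit)
    (e : AsyncExec N R C3 phi (algo1 phi))
    (hWhite : ∀ r, (e.cfg 0).light r = C3.White)
    (b : ZMod N) (hSeg : SegmentInitOn phi (e.cfg 0) b Minit Oinit)
    (h : ℕ) (hh1 : 1 ≤ h) (hhM : h ≤ Minit - 1)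
    (t : ℕ) (r : Fin R)
    (harrive : (e.cfg (t+1)).pos r = b + (h : ZMod N))
    (hmoved : (e.cfg t).pos r ≠ (e.cfg (t+1)).pos r) :
    (Odd h → (e.cfg (t+1)).light r = C3.Blue) ∧
    (Even h → (e.cfg (t+1)).light r = C3.Red) := by
  haveI : NeZero N := ⟨by omega⟩
  have hgeo : Minit + phi ≤ N := A1P.seg_le hN hphi hSeg
  have hInv : ∀ s, A1P.Inv Minit e b s := by
    intro s
    induction s with
    | zero => exact A1P.inv_zero hN hphi hWhite hSeg hgeo
    | succ n ih => exact A1P.inv_step hN hphi hgeo hM ih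
  rcases e.step t r with ⟨hp, -, -⟩ | ⟨-, hp, -, -⟩ | ⟨c, u, -, hp, -, -⟩ |
    ⟨c, u, hpl, hp, hl, -⟩
  · exact absurd hp.symm hmoved
  · exact absurd hp.symm hmoved
  · exact absurd hp.symm hmoved
  · have hu : u = b + (h : ZMod N) := hp.symm.trans harrive
    have hne : u ≠ (e.cfg t).pos r := by
      intro hh
      exact hmoved (by rw [hp, hh])
    obtain ⟨-, -, hcW, hcC⟩ := (hInv t).h3 r c u hpl
    have hcne : c ≠ C3.White := fun hcw => hne ((hcW hcw).1)
    have hc : c = A1P.colorOf h := by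
      have h8 := hcC hcne
      rwa [hu, A1P.off_add b (by omega : h < N)] at h8
    constructor
    · intro hodd
      have hhe : ¬ Even h := by
        rw [Nat.even_iff]; rw [Nat.odd_iff] at hodd; omega
      rw [hl, hc]
      exact A1P.colorOf_blue hhe
    · intro heven
      rw [hl, hc]
      exact A1P.colorOf_red heven


end Gathering
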